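/- For every integer d with 0 ≤ d ≤ n/2, the number of top sets of length d in [n] equals C(n,d) − C(n,d−1), where C(n,−1) = 0. -/
import Mathlib


/-- `B : Fin d → Fin n` is a top set if it is strictly increasing and there is a
sequence `A` of `d` distinct elements, disjoint from `B`, with `A i < B i` for all `i`. -/
def IsTopSet {n d : ℕ} (B : Fin d → Fin n) : Prop :=
  StrictMono B ∧ ∃ A : Fin d → Fin n,
    Function.Injective A ∧ (∀ i j, A i ≠ B j) ∧ ∀ i, A i < B i

open Finset

def Good (s : Finset ℕ) : Prop := ∀ m, 2 * (s.filter (· ≤ m)).card ≤ m + 1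

open scoped Classical in
noncomputable def topCount (n d : ℕ) : ℕ :=
  (((Finset.range n).powersetCard d).filter Good).card

open scoped Classical

lemma topCount_zero (n : ℕ) : topCount n 0 = 1 := by
  unfold topCount
  rw [Finset.powersetCard_zero]
  have : Good (∅ : Finset ℕ) := by intro m; simp
  simp [Finset.filter_singleton, this]

lemma good_two_mul_le {s : Finset ℕ} {n : ℕ} (hs : s ⊆ Finset.range n) (hg : Good s) :
    2 * s.card ≤ n ∨ s = ∅ := by
  rcases s.eq_empty_or_nonempty with h | h
  · exact Or.inr h
  · left
    have hn : n ≠ 0 := by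
      rcases h with ⟨x, hx⟩
      have := hs hx
      simp only [Finset.mem_range] at this
      omega
    have := hg (n - 1)
    have hfe : s.filter (· ≤ n - 1) = s := by
      apply Finset.filter_true_of_mem
      intro x hx
      have := hs hx
      simp only [Finset.mem_range] at this
      omega
    rw [hfe] at this
    omega

lemma topCount_big {n d : ℕ} (h : n < 2 * d) : topCount n d = 0 := by
  unfold topCount
  rw [Finset.card_eq_zero, Finset.filter_eq_empty_iff]
  intro s hs
  simp only [Finset.mem_powersetCard] at hs
  intro hg
  rcases good_two_mul_le hs.1 hg with h2 | h2
  · omega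
  · subst h2; simp at hs; omega

lemma topCount_rec (n d : ℕ) :
    topCount (n + 1) (d + 1) =
      topCount n (d + 1) + (if 2 * (d + 1) ≤ n + 1 then topCount n d else 0) := by
  unfold topCount
  set X := (((Finset.range (n+1)).powersetCard (d+1)).filter Good) with hX
  rw [← Finset.card_filter_add_card_filter_not (p := fun s => n ∈ s) (s := X)]
  rw [add_comm]
  congr 1
  · -- sets not containing n
    congr 1
    ext s
    simp only [hX, Finset.mem_filter, Finset.mem_powersetCard]
    constructor
    · rintro ⟨⟨⟨hsub, hcard⟩, hg⟩, hn⟩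
      refine ⟨⟨fun x hx => ?_, hcard⟩, hg⟩
      have := hsub hx
      simp only [Finset.mem_range] at this ⊢
      rcases Nat.lt_succ_iff_lt_or_eq.mp this with h | h
      · exact h
      · exact absurd (h ▸ hx) hn
    · rintro ⟨⟨hsub, hcard⟩, hg⟩
      have hsub' : s ⊆ Finset.range (n+1) := hsub.trans (by intro x; simp only [Finset.mem_range]; omega)
      refine ⟨⟨⟨hsub', hcard⟩, hg⟩, fun hn => ?_⟩
      have := hsub hn
      simp at this
  · -- sets containing n
    by_cases hc : 2 * (d + 1) ≤ n + 1
    · simp only [hc, if_true]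
      apply Finset.card_bij (fun s _ => s.erase n)
      · rintro s hs
        simp only [hX, Finset.mem_filter, Finset.mem_powersetCard] at hs ⊢
        obtain ⟨⟨⟨hsub, hcard⟩, hg⟩, hn⟩ := hs
        refine ⟨⟨fun x hx => ?_, ?_⟩, ?_⟩
        · have hxs := Finset.mem_of_mem_erase hx
          have hxn := Finset.ne_of_mem_erase hx
          have := hsub hxs
          simp only [Finset.mem_range] at this ⊢
          omega
        · rw [Finset.card_erase_of_mem hn, hcard]
          omega
        · intro m
          calc 2 * ((s.erase n).filter (· ≤ m)).card ≤ 2 * (s.filter (· ≤ m)).card := by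
                have : (s.erase n).filter (· ≤ m) ⊆ s.filter (· ≤ m) :=
                  Finset.filter_subset_filter _ (Finset.erase_subset _ _)
                exact Nat.mul_le_mul_left 2 (Finset.card_le_card this)
            _ ≤ m + 1 := hg m
      · rintro s hs t ht hst
        simp only [hX, Finset.mem_filter] at hs ht
        have hns : n ∈ s := hs.2
        have hnt : n ∈ t := ht.2
        rw [← Finset.insert_erase hns, ← Finset.insert_erase hnt, hst]
      · rintro t ht
        simp only [Finset.mem_filter, Finset.mem_powersetCard] at ht
        obtain ⟨⟨hsub, hcard⟩, hg⟩ := ht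
        have hnt : n ∉ t := fun h => by have := hsub h; simp at this
        refine ⟨insert n t, ?_, by rw [Finset.erase_insert hnt]⟩
        simp only [hX, Finset.mem_filter, Finset.mem_powersetCard]
        refine ⟨⟨⟨?_, ?_⟩, ?_⟩, Finset.mem_insert_self n t⟩
        · intro x hx
          rcases Finset.mem_insert.mp hx with h | h
          · simp [h]
          · have := hsub h
            simp only [Finset.mem_range] at this ⊢
            omega
        · rw [Finset.card_insert_of_notMem hnt, hcard]
        · intro m
          by_cases hm : n ≤ m
          · have : (insert n t).filter (· ≤ m) = insert n (t.filter (· ≤ m)) := by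
              rw [Finset.filter_insert, if_pos hm]
            rw [this, Finset.card_insert_of_notMem (fun h => hnt (Finset.mem_filter.mp h).1)]
            have h1 : (t.filter (· ≤ m)).card ≤ t.card := Finset.card_filter_le _ _
            omega
          · have : (insert n t).filter (· ≤ m) = t.filter (· ≤ m) := by
              rw [Finset.filter_insert, if_neg hm]
            rw [this]
            exact hg m
    · simp only [hc, if_false]
      rw [Finset.card_eq_zero, Finset.filter_eq_empty_iff]
      intro s hs
      simp only [hX, Finset.mem_filter, Finset.mem_powersetCard] at hs
      obtain ⟨⟨hsub, hcard⟩, hg⟩ := hs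
      intro hn
      have := hg n
      have hfe : s.filter (· ≤ n) = s := by
        apply Finset.filter_true_of_mem
        intro x hx
        have := hsub hx
        simp only [Finset.mem_range] at this
        omega
      rw [hfe] at this
      omega

lemma topCount_succ_formula : ∀ n d : ℕ, 2 * (d + 1) ≤ n + 1 →
    topCount n (d + 1) + n.choose d = n.choose (d + 1) := by
  intro n
  induction n with
  | zero => intro d hd; omega
  | succ n ih =>
    intro d hd
    rw [topCount_rec n d]
    by_cases hc : 2 * (d + 1) ≤ n + 1
    · rw [if_pos hc]
      have h1 := ih d hc
      match d with
      | 0 =>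
        have p1 : (n+1).choose (0+1) = n.choose 0 + n.choose (0+1) := Nat.choose_succ_succ n 0
        simp only [topCount_zero, Nat.choose_zero_right] at *
        omega
      | d' + 1 =>
        have h2 := ih d' (by omega)
        have p1 : (n+1).choose (d'+1+1) = n.choose (d'+1) + n.choose (d'+1+1) :=
          Nat.choose_succ_succ n (d'+1)
        have p2 : (n+1).choose (d'+1) = n.choose d' + n.choose (d'+1) :=
          Nat.choose_succ_succ n d'
        omega
    · rw [if_neg hc]
      have h0 : topCount n (d + 1) = 0 := topCount_big (by omega)
      rw [h0]
      have hsym := Nat.choose_symm (show d + 1 ≤ n + 1 by omega)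
      rw [show n + 1 - (d + 1) = d from by omega] at hsym
      omega

lemma val_comp_inj {n d : ℕ} {B : Fin d → Fin n} (hB : StrictMono B) :
    Function.Injective (fun k : Fin d => (B k : ℕ)) :=
  fun a b hab => hB.injective (Fin.val_injective hab)

lemma good_image_iff {n d : ℕ} {B : Fin d → Fin n} (hB : StrictMono B) :
    Good (Finset.image (fun k => (B k : ℕ)) Finset.univ) ↔
      ∀ k : Fin d, 2 * (k : ℕ) + 1 ≤ (B k : ℕ) := by
  set s := Finset.image (fun k => (B k : ℕ)) Finset.univ with hs
  constructor
  · intro hg k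
    have h1 := hg (B k : ℕ)
    have hsub : (Finset.Iic k).image (fun j => (B j : ℕ)) ⊆ s.filter (· ≤ (B k : ℕ)) := by
      intro x hx
      simp only [Finset.mem_image, Finset.mem_Iic] at hx
      obtain ⟨j, hj, rfl⟩ := hx
      simp only [Finset.mem_filter, hs, Finset.mem_image]
      exact ⟨⟨j, Finset.mem_univ j, rfl⟩, Fin.le_def.mp (hB.monotone hj)⟩
    have hcard : ((Finset.Iic k).image (fun j => (B j : ℕ))).card = (k : ℕ) + 1 := by
      rw [Finset.card_image_of_injective _ (val_comp_inj hB), Fin.card_Iic]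
    have := Finset.card_le_card hsub
    omega
  · intro hbd m
    set t := Finset.univ.filter (fun k : Fin d => (B k : ℕ) ≤ m) with ht
    have himg : s.filter (· ≤ m) = t.image (fun k => (B k : ℕ)) := by
      ext x
      simp only [hs, ht, Finset.mem_filter, Finset.mem_image, Finset.mem_univ, true_and]
      constructor
      · rintro ⟨⟨j, rfl⟩, hx⟩; exact ⟨j, hx, rfl⟩
      · rintro ⟨j, hj, rfl⟩; exact ⟨⟨j, rfl⟩, hj⟩
    rw [himg, Finset.card_image_of_injective _ (val_comp_inj hB)]
    rcases t.eq_empty_or_nonempty with h | h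
    · rw [h]; simp
    · set k₀ := t.max' h with hk₀
      have hk₀m : (B k₀ : ℕ) ≤ m :=
        (Finset.mem_filter.mp (t.max'_mem h)).2
      have hteq : t = Finset.Iic k₀ := by
        ext x
        simp only [ht, Finset.mem_filter, Finset.mem_univ, true_and, Finset.mem_Iic]
        constructor
        · intro hx; exact t.le_max' x (by rw [ht]; simp [hx])
        · intro hx
          exact le_trans (Fin.le_def.mp (hB.monotone hx)) hk₀m
      rw [hteq, Fin.card_Iic]
      have := hbd k₀
      omega

lemma isTopSet_iff {n d : ℕ} (hd : 2 * d ≤ n) (B : Fin d → Fin n) :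
    IsTopSet B ↔ StrictMono B ∧ ∀ k : Fin d, 2 * (k : ℕ) + 1 ≤ (B k : ℕ) := by
  constructor
  · rintro ⟨hmono, A, hAinj, hABne, hAlt⟩
    refine ⟨hmono, fun k => ?_⟩
    set u := (Finset.Iic k).image (fun j => (A j : ℕ)) ∪ (Finset.Iic k).image (fun j => (B j : ℕ))
      with hu
    have hsub : u ⊆ Finset.range ((B k : ℕ) + 1) := by
      intro x hx
      simp only [hu, Finset.mem_union, Finset.mem_image, Finset.mem_Iic] at hx
      simp only [Finset.mem_range]
      rcases hx with ⟨j, hj, rfl⟩ | ⟨j, hj, rfl⟩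
      · have h1 : A j < B j := hAlt j
        have h2 : B j ≤ B k := hmono.monotone hj
        omega
      · have h2 : B j ≤ B k := hmono.monotone hj
        omega
    have hdisj : Disjoint ((Finset.Iic k).image (fun j => (A j : ℕ)))
        ((Finset.Iic k).image (fun j => (B j : ℕ))) := by
      rw [Finset.disjoint_left]
      rintro x hx hx'
      simp only [Finset.mem_image, Finset.mem_Iic] at hx hx'
      obtain ⟨i, _, hi⟩ := hx
      obtain ⟨j, _, hj⟩ := hx'
      exact hABne i j (Fin.val_injective (hi.trans hj.symm))
    have hcard : u.card = 2 * (k : ℕ) + 2 := by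
      rw [hu, Finset.card_union_of_disjoint hdisj,
        Finset.card_image_of_injective _ (fun a b hab => hAinj (Fin.val_injective hab)),
        Finset.card_image_of_injective _ (val_comp_inj hmono), Fin.card_Iic]
      omega
    have := Finset.card_le_card hsub
    rw [hcard, Finset.card_range] at this
    omega
  · rintro ⟨hmono, hbd⟩
    refine ⟨hmono, ?_⟩
    set comp := (Finset.image B Finset.univ)ᶜ with hcomp
    have hcompcard : comp.card = n - d := by
      rw [hcomp, Finset.card_compl, Finset.card_image_of_injective _ hmono.injective]
      simp
    have hdn : d ≤ n - d := by omega
    set e := comp.orderEmbOfFin hcompcard with he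
    refine ⟨fun k => e ⟨(k : ℕ), lt_of_lt_of_le k.2 hdn⟩, ?_, ?_, ?_⟩
    · intro a b hab
      have h2 := e.injective hab
      rw [Fin.mk.injEq] at h2
      exact Fin.val_injective h2
    · intro i j
      have h1 : e ⟨(i : ℕ), lt_of_lt_of_le i.2 hdn⟩ ∈ comp := comp.orderEmbOfFin_mem hcompcard _
      rw [hcomp, Finset.mem_compl] at h1
      intro heq
      apply h1
      simp only at heq
      rw [heq]
      exact Finset.mem_image_of_mem B (Finset.mem_univ j)
    · intro k
      by_contra hcon
      push_neg at hcon
      set u := comp.filter (fun y => y < B k) with hu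
      have hucard : (u.card : ℕ) + (k : ℕ) = (B k : ℕ) := by
        have hsplit : Finset.Iio (B k) = u ∪ (Finset.Iio k).image B := by
          ext x
          simp only [hu, Finset.mem_Iio, Finset.mem_union, Finset.mem_filter, hcomp,
            Finset.mem_compl, Finset.mem_image, Finset.mem_univ, true_and]
          constructor
          · intro hx
            by_cases hxB : ∃ j, B j = x
            · obtain ⟨j, rfl⟩ := hxB
              exact Or.inr ⟨j, hmono.lt_iff_lt.mp hx, rfl⟩
            · exact Or.inl ⟨fun h => hxB h, hx⟩
          · rintro (⟨_, hx⟩ | ⟨j, hj, rfl⟩)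
            · exact hx
            · exact hmono hj
        have hdisj : Disjoint u ((Finset.Iio k).image B) := by
          rw [Finset.disjoint_left]
          rintro x hx hx'
          simp only [hu, Finset.mem_filter, hcomp, Finset.mem_compl] at hx
          obtain ⟨j, _, rfl⟩ := Finset.mem_image.mp hx'
          exact hx.1 (Finset.mem_image_of_mem B (Finset.mem_univ j))
        have h1 : (Finset.Iio (B k)).card = (B k : ℕ) := Fin.card_Iio (B k)
        rw [hsplit, Finset.card_union_of_disjoint hdisj,
          Finset.card_image_of_injective _ hmono.injective, Fin.card_Iio] at h1
        omega
      have hk1 : (k : ℕ) + 1 ≤ u.card := by have := hbd k; omega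
      -- u is contained in the image of the first k elements of e
      have husub : u ⊆ (Finset.Iio (⟨(k : ℕ), lt_of_lt_of_le k.2 hdn⟩ : Fin (n - d))).image e := by
        intro y hy
        have hyc : y ∈ comp := (Finset.mem_filter.mp hy).1
        have hylt : y < B k := (Finset.mem_filter.mp hy).2
        have : y ∈ Set.range e := by
          rw [he, Finset.range_orderEmbOfFin]
          exact hyc
        obtain ⟨j, hj⟩ := this
        have hjk : j < (⟨(k : ℕ), lt_of_lt_of_le k.2 hdn⟩ : Fin (n - d)) := by
          have : e j < e ⟨(k : ℕ), lt_of_lt_of_le k.2 hdn⟩ := by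
            rw [hj]
            exact lt_of_lt_of_le hylt hcon
          exact e.strictMono.lt_iff_lt.mp this
        exact Finset.mem_image.mpr ⟨j, Finset.mem_Iio.mpr hjk, hj⟩
      have := Finset.card_le_card husub
      rw [Finset.card_image_of_injective _ e.injective, Fin.card_Iio] at this
      simp only at this
      omega

lemma val_strictMono {n d : ℕ} {B : Fin d → Fin n} (hB : StrictMono B) :
    StrictMono (fun k : Fin d => (B k : ℕ)) := fun a b h => Fin.lt_def.mp (hB h)

lemma card_topSets_eq {n d : ℕ} (hd : 2 * d ≤ n) :
    Nat.card {B : Fin d → Fin n // IsTopSet B} = topCount n d := by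
  rw [Nat.card_eq_fintype_card, Fintype.card_subtype]
  unfold topCount
  apply Finset.card_bij (fun B _ => Finset.image (fun k => (B k : ℕ)) Finset.univ)
  · intro B hB
    rw [Finset.mem_filter] at hB
    obtain ⟨hmono, hbd⟩ := (isTopSet_iff hd B).mp hB.2
    rw [Finset.mem_filter, Finset.mem_powersetCard]
    refine ⟨⟨?_, ?_⟩, (good_image_iff hmono).mpr hbd⟩
    · intro x hx
      obtain ⟨k, _, rfl⟩ := Finset.mem_image.mp hx
      exact Finset.mem_range.mpr (B k).2
    · rw [Finset.card_image_of_injective _ (val_strictMono hmono).injective]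
      simp
  · intro B hB B' hB' heq
    rw [Finset.mem_filter] at hB hB'
    have hmono := ((isTopSet_iff hd B).mp hB.2).1
    have hmono' := ((isTopSet_iff hd B').mp hB'.2).1
    have hcard : (Finset.image (fun k => (B k : ℕ)) Finset.univ).card = d := by
      rw [Finset.card_image_of_injective _ (val_strictMono hmono).injective]; simp
    have e1 : (fun k : Fin d => (B k : ℕ)) =
        (Finset.image (fun k => (B k : ℕ)) Finset.univ).orderEmbOfFin hcard :=
      Finset.orderEmbOfFin_unique hcard
        (fun x => Finset.mem_image_of_mem _ (Finset.mem_univ x)) (val_strictMono hmono)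
    have hcard' : (Finset.image (fun k => (B' k : ℕ)) Finset.univ).card = d := by
      rw [Finset.card_image_of_injective _ (val_strictMono hmono').injective]; simp
    have e2 : (fun k : Fin d => (B' k : ℕ)) =
        (Finset.image (fun k => (B' k : ℕ)) Finset.univ).orderEmbOfFin hcard' :=
      Finset.orderEmbOfFin_unique hcard'
        (fun x => Finset.mem_image_of_mem _ (Finset.mem_univ x)) (val_strictMono hmono')
    have e3 : (fun k : Fin d => (B' k : ℕ)) =
        (Finset.image (fun k => (B k : ℕ)) Finset.univ).orderEmbOfFin hcard :=
      Finset.orderEmbOfFin_unique hcard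
        (fun x => heq ▸ Finset.mem_image_of_mem _ (Finset.mem_univ x)) (val_strictMono hmono')
    funext k
    apply Fin.val_injective
    exact congrFun (e1.trans e3.symm) k
  · intro s hs
    rw [Finset.mem_filter, Finset.mem_powersetCard] at hs
    obtain ⟨⟨hsub, hcard⟩, hg⟩ := hs
    set B : Fin d → Fin n := fun k =>
      ⟨s.orderEmbOfFin hcard k, Finset.mem_range.mp (hsub (s.orderEmbOfFin_mem hcard k))⟩
      with hB
    have hmono : StrictMono B := fun a b h =>
      Fin.mk_lt_mk.mpr ((s.orderEmbOfFin hcard).strictMono h)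
    have himg : Finset.image (fun k => (B k : ℕ)) Finset.univ = s := by
      ext x
      simp only [Finset.mem_image, Finset.mem_univ, true_and, hB]
      constructor
      · rintro ⟨k, rfl⟩; exact s.orderEmbOfFin_mem hcard k
      · intro hx
        have : x ∈ Set.range (s.orderEmbOfFin hcard) := by
          rw [Finset.range_orderEmbOfFin]; exact hx
        obtain ⟨k, hk⟩ := this
        exact ⟨k, hk⟩
    refine ⟨B, ?_, himg⟩
    rw [Finset.mem_filter]
    refine ⟨Finset.mem_univ B, (isTopSet_iff hd B).mpr ⟨hmono, ?_⟩⟩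
    refine (good_image_iff hmono).mp ?_
    rwa [himg]

theorem card_topSets {n d : ℕ} (hd : 2 * d ≤ n) :
    (Nat.card {B : Fin d → Fin n // IsTopSet B} : ℤ) =
      (n.choose d : ℤ) - (if d = 0 then 0 else (n.choose (d - 1) : ℤ)) := by
  rw [card_topSets_eq hd]
  match d with
  | 0 => simp [topCount_zero]
  | d' + 1 =>
    rw [if_neg (by omega : ¬ d' + 1 = 0)]
    have := topCount_succ_formula n d' (by omega)
    simp only [Nat.add_sub_cancel]
    push_cast
    omega
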